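/- If a_1, a_2 are states of a state-finite retractable automaton A with B_1 ⊆ R(a_1) and B_2 ⊆ R(a_2) for distinct minimal subautomata B_1, B_2 of A, then R(a_1) ∩ R(a_2) = ∅. -/

import Mathlib

universe u v

/-- The transition function extended to words (`X*`). -/
def deltaStar {A X : Type*} (δ : A → X → A) : A → List X → A
  | a, [] => a
  | a, x :: p => deltaStar δ (δ a x) p

/-- `B` is a subautomaton of the automaton with transition `δ`. -/
def IsSubaut {A X : Type*} (δ : A → X → A) (B : Set A) : Prop :=
  B.Nonempty ∧ ∀ b ∈ B, ∀ x : X, δ b x ∈ B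

/-- `φ` is a retract homomorphism of the automaton onto the subautomaton `B`:
a homomorphism of `A` onto `B` leaving the elements of `B` fixed. -/
def IsRetractHom {A X : Type*} (δ : A → X → A) (B : Set A) (φ : A → A) : Prop :=
  (∀ a, φ a ∈ B) ∧ (∀ b ∈ B, φ b = b) ∧ ∀ a x, φ (δ a x) = δ (φ a) x

/-- `B` is a retract subautomaton. -/
def IsRetract {A X : Type*} (δ : A → X → A) (B : Set A) : Prop :=
  ∃ φ, IsRetractHom δ B φ

/-- An automaton is retractable if every subautomaton is retract. -/
def Retractable {A X : Type*} (δ : A → X → A) : Prop :=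
  ∀ B, IsSubaut δ B → IsRetract δ B

/-- Retractability of the subautomaton on the carrier `D` (homomorphisms are
represented by functions on the ambient state set, restricted to `D`). -/
def RetractableOn {A X : Type*} (δ : A → X → A) (D : Set A) : Prop :=
  ∀ C ⊆ D, IsSubaut δ C →
    ∃ φ : A → A, (∀ a ∈ D, φ a ∈ C) ∧ (∀ c ∈ C, φ c = c) ∧
      ∀ a ∈ D, ∀ x, φ (δ a x) = δ (φ a) x

/-- The principal subautomaton `R(a) = δ(a, X*)` generated by `a`. -/
def Rset {A X : Type*} (δ : A → X → A) (a : A) : Set A :=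
  {b | ∃ p : List X, deltaStar δ a p = b}

/-- The `R`-class `R_a = {b : R(b) = R(a)}`. -/
def Rclass {A X : Type*} (δ : A → X → A) (a : A) : Set A :=
  {b | Rset δ b = Rset δ a}

/-- `R[a] = R(a) − R_a`. -/
def Rideal {A X : Type*} (δ : A → X → A) (a : A) : Set A :=
  Rset δ a \ Rclass δ a

/-- The Rees congruence induced by `B`: two states are related iff they are
equal or both lie in `B`. -/
def reesRel {A : Type*} (B : Set A) (u v : A) : Prop :=
  u = v ∨ (u ∈ B ∧ v ∈ B)

/-- A minimal subautomaton: a subautomaton with no proper subautomaton. -/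
def IsMinimalSubaut {A X : Type*} (δ : A → X → A) (B : Set A) : Prop :=
  IsSubaut δ B ∧ ∀ C ⊆ B, IsSubaut δ C → C = B

/-- The automaton has a kernel: a subautomaton contained in every subautomaton. -/
def HasKernel {A X : Type*} (δ : A → X → A) : Prop :=
  ∃ K, IsSubaut δ K ∧ ∀ B, IsSubaut δ B → K ⊆ B

/-- The principal factor `R{a}` (the Rees factor of `R(a)` modulo `R[a]`,
described via the Rees congruence) is strongly connected. -/
def FactorSC {A X : Type*} (δ : A → X → A) (a : A) : Prop :=
  ∀ b ∈ Rset δ a, ∀ c ∈ Rset δ a,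
    ∃ p : List X, p ≠ [] ∧ reesRel (Rideal δ a) (deltaStar δ b p) c

/-- The principal factor `R{a}` is a strongly trap-connected non-trivial
one-trap automaton (with trap the class of `t`). -/
def FactorSTC {A X : Type*} (δ : A → X → A) (a : A) : Prop :=
  ∃ t ∈ Rset δ a,
    (∀ x, reesRel (Rideal δ a) (δ t x) t) ∧
    (∃ b ∈ Rset δ a, ¬ reesRel (Rideal δ a) b t) ∧
    (∀ b ∈ Rset δ a, (∀ x, reesRel (Rideal δ a) (δ b x) b) → reesRel (Rideal δ a) b t) ∧
    (∀ b ∈ Rset δ a, ∀ c ∈ Rset δ a, ¬ reesRel (Rideal δ a) b t →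
      ∃ p : List X, p ≠ [] ∧ reesRel (Rideal δ a) (deltaStar δ b p) c)

/-- The principal factor `R{a}` is a strongly trapped non-trivial one-trap
automaton (with trap the class of `t`). -/
def FactorST {A X : Type*} (δ : A → X → A) (a : A) : Prop :=
  ∃ t ∈ Rset δ a,
    (∃ b ∈ Rset δ a, ¬ reesRel (Rideal δ a) b t) ∧
    (∀ b ∈ Rset δ a, (∀ x, reesRel (Rideal δ a) (δ b x) b) → reesRel (Rideal δ a) b t) ∧
    (∀ b ∈ Rset δ a, ∀ x, reesRel (Rideal δ a) (δ b x) t)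

/-- Semiconnected: every principal factor is strongly connected or strongly
trap-connected. -/
def Semiconnected {A X : Type*} (δ : A → X → A) : Prop :=
  ∀ a, FactorSC δ a ∨ FactorSTC δ a

/-- The subautomaton on `D` is semiconnected, via the characterization: for
every subautomaton `C ⊆ D` and every `a ∈ C` there are `b ∈ C` and a nonempty
word `p` with `a = δ(b,p)`. -/
def SemiconnectedOn {A X : Type*} (δ : A → X → A) (D : Set A) : Prop :=
  ∀ C ⊆ D, IsSubaut δ C → ∀ a ∈ C, ∃ b ∈ C, ∃ p : List X, p ≠ [] ∧ deltaStar δ b p = a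

/-- The automaton is a dilation of its subautomaton `B`. -/
def IsDilationOf {A X : Type*} (δ : A → X → A) (B : Set A) : Prop :=
  IsSubaut δ B ∧ ∃ φ : A → A, (∀ a, φ a ∈ B) ∧ (∀ b ∈ B, φ b = b) ∧
    ∀ a x, δ a x = δ (φ a) x

/-- Extension of a partial transition function (`none` = the removed trap)
to words. -/
def pStar {C X : Type*} (d : C → X → Option C) : C → List X → Option C
  | a, [] => some a
  | a, x :: p => (d a x).bind fun b => pStar d b p

/-- The data of the Construction: a finite tree `(T, le)` with least element
`i0`; `C i` is the trap-removed part `A⁰ᵢ` of the automaton `Aᵢ`, with partial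
transition `d i` (`none` means the trap); `A_{i0}` is strongly connected and
the other `Aᵢ` are non-trivial strongly trap-connected one-trap automata;
`Φ i j` are the composite partial homomorphisms along covering chains
(given here as coherent data whose covering components satisfy conditions
(ii) and (iii)); `δ'` is the glued transition function on `A = ⋃ A⁰ᵢ`. -/
def ConstructionSpec {X : Type*} (T : Type*) (le : T → T → Prop) (i0 : T)
    (C : T → Type*) (d : ∀ i, C i → X → Option (C i))
    (Φ : ∀ i j, le j i → C i → C j)
    (δ' : (Σ i, C i) → X → Σ i, C i) : Prop :=
  (∀ i, le i i) ∧ (∀ i j, le i j → le j i → i = j) ∧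
  (∀ i j k, le i j → le j k → le i k) ∧
  Finite T ∧
  (∀ S : Set T, S.Nonempty → (∃ u, ∀ i ∈ S, le i u) → ∃ g ∈ S, ∀ i ∈ S, le i g) ∧
  (∀ i, le i0 i) ∧
  Nonempty (C i0) ∧
  (∀ (a : C i0) (x : X), (d i0 a x).isSome) ∧
  (∀ a b : C i0, ∃ p : List X, p ≠ [] ∧ pStar (d i0) a p = some b) ∧
  (∀ i, i ≠ i0 → Nonempty (C i) ∧
    (∀ a b : C i, ∃ p : List X, p ≠ [] ∧ pStar (d i) a p = some b) ∧
    (∀ a : C i, ∃ p : List X, p ≠ [] ∧ pStar (d i) a p = none)) ∧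
  (∀ i (h : le i i) (a : C i), Φ i i h a = a) ∧
  (∀ i j k (h1 : le j i) (h2 : le k j) (h3 : le k i) (a : C i),
    Φ j k h2 (Φ i j h1 a) = Φ i k h3 a) ∧
  (∀ i j (h : le j i), i ≠ j → (∀ k, le j k → le k i → k = j ∨ k = i) →
    (∀ (a : C i) (x : X) (b : C i),
      d i a x = some b → d j (Φ i j h a) x = some (Φ i j h b)) ∧
    ∃ (a : C i) (x : X), d i a x = none ∧ (d j (Φ i j h a) x).isSome) ∧
  (∀ i (a : C i) (x : X), ∃ (j : T) (hj : le j i) (b : C j),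
    δ' ⟨i, a⟩ x = ⟨j, b⟩ ∧ d j (Φ i j hj a) x = some b ∧
    ∀ k (hk : le k i), (d k (Φ i k hk a) x).isSome → le k j)

/-! In a retractable automaton `R(a)` contains at most one minimal subautomaton: if
`B, M ⊆ R(a)` are minimal and `φ` retracts `A` onto `B ∪ M`, then `B ∪ M = φ(B ∪ M) ⊆ R(φ a)`,
which lies inside `B` or inside `M`. A common state `c` of `R(a₁)` and `R(a₂)` would force a
minimal subautomaton of `R(c)`, which exists by finiteness, to equal both `B₁` and `B₂`. -/

section Automaton

variable {A X : Type*} {δ : A → X → A}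

theorem deltaStar_append (a : A) (p q : List X) :
    deltaStar δ a (p ++ q) = deltaStar δ (deltaStar δ a p) q := by
  induction p generalizing a with
  | nil => rfl
  | cons x p ih => exact ih (δ a x)

theorem deltaStar_mem_Rset (a : A) (p : List X) : deltaStar δ a p ∈ Rset δ a :=
  ⟨p, rfl⟩

theorem map_deltaStar {φ : A → A} (hφ : ∀ a x, φ (δ a x) = δ (φ a) x) (a : A) (p : List X) :
    φ (deltaStar δ a p) = deltaStar δ (φ a) p := by
  induction p generalizing a with
  | nil => rfl
  | cons x p ih => simp only [deltaStar, ih, hφ]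

theorem IsSubaut.deltaStar_mem {B : Set A} (hB : IsSubaut δ B) {b : A} (hb : b ∈ B)
    (p : List X) : deltaStar δ b p ∈ B := by
  induction p generalizing b with
  | nil => exact hb
  | cons x p ih => exact ih (hB.2 b hb x)

theorem IsSubaut.Rset_subset {B : Set A} (hB : IsSubaut δ B) {b : A} (hb : b ∈ B) :
    Rset δ b ⊆ B := by
  rintro _ ⟨p, rfl⟩
  exact hB.deltaStar_mem hb p

theorem IsSubaut.union {B C : Set A} (hB : IsSubaut δ B) (hC : IsSubaut δ C) :
    IsSubaut δ (B ∪ C) :=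
  ⟨hB.1.mono Set.subset_union_left, fun b hb x =>
    hb.imp (fun hb => hB.2 b hb x) (fun hb => hC.2 b hb x)⟩

theorem Rset_isSubaut (a : A) : IsSubaut δ (Rset δ a) := by
  refine ⟨⟨a, [], rfl⟩, ?_⟩
  rintro _ ⟨p, rfl⟩ x
  exact ⟨p ++ [x], deltaStar_append a p [x]⟩

theorem Rset_subset_Rset {a b : A} (h : b ∈ Rset δ a) : Rset δ b ⊆ Rset δ a :=
  (Rset_isSubaut a).Rset_subset h

theorem IsRetractHom.subset_Rset_apply {B : Set A} {φ : A → A} (hφ : IsRetractHom δ B φ)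
    {a : A} (hB : B ⊆ Rset δ a) : B ⊆ Rset δ (φ a) := by
  intro b hb
  obtain ⟨p, rfl⟩ := hB hb
  rw [← hφ.2.1 _ hb, map_deltaStar hφ.2.2]
  exact deltaStar_mem_Rset (φ a) p

theorem IsSubaut.exists_isMinimalSubaut_subset [Finite A] {S : Set A} (hS : IsSubaut δ S) :
    ∃ M ⊆ S, IsMinimalSubaut δ M := by
  obtain ⟨M, hMS, hM, hmin⟩ := exists_minimal_le_of_wellFoundedLT (IsSubaut δ) S hS
  exact ⟨M, hMS, hM, fun C hCM hC => (hmin hC hCM).antisymm' hCM⟩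

theorem IsMinimalSubaut.eq_of_subset_Rset (h : Retractable δ) {a : A} {B M : Set A}
    (hB : IsMinimalSubaut δ B) (hM : IsMinimalSubaut δ M)
    (hBa : B ⊆ Rset δ a) (hMa : M ⊆ Rset δ a) : B = M := by
  obtain ⟨φ, hφ⟩ := h (B ∪ M) (hB.1.union hM.1)
  have hcover : B ∪ M ⊆ Rset δ (φ a) := hφ.subset_Rset_apply (Set.union_subset hBa hMa)
  rcases hφ.1 a with hφa | hφa
  · have hMB : M ⊆ B :=
      Set.subset_union_right.trans (hcover.trans (hB.1.Rset_subset hφa))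
    exact (hB.2 M hMB hM.1).symm
  · have hBM : B ⊆ M :=
      Set.subset_union_left.trans (hcover.trans (hM.1.Rset_subset hφa))
    exact hM.2 B hBM hB.1

end Automaton

theorem stmt_5_general {A X : Type*} [Finite A]
    (δ : A → X → A) (h : Retractable δ) (a₁ a₂ : A) (B₁ B₂ : Set A)
    (hB₁ : IsMinimalSubaut δ B₁) (hB₂ : IsMinimalSubaut δ B₂) (hne : B₁ ≠ B₂)
    (h₁ : B₁ ⊆ Rset δ a₁) (h₂ : B₂ ⊆ Rset δ a₂) :
    Rset δ a₁ ∩ Rset δ a₂ = ∅ := by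
  refine Set.eq_empty_of_forall_notMem fun c ⟨hc₁, hc₂⟩ => hne ?_
  obtain ⟨M, hMc, hM⟩ := (Rset_isSubaut (δ := δ) c).exists_isMinimalSubaut_subset
  calc B₁ = M := hB₁.eq_of_subset_Rset h hM h₁ (hMc.trans (Rset_subset_Rset hc₁))
    _ = B₂ := (hB₂.eq_of_subset_Rset h hM h₂ (hMc.trans (Rset_subset_Rset hc₂))).symm

/-- Lemma 4. -/
theorem stmt_5 {A X : Type*} [Finite A] [Nonempty A] [Nonempty X]
    (δ : A → X → A) (h : Retractable δ) (a₁ a₂ : A) (B₁ B₂ : Set A)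
    (hB₁ : IsMinimalSubaut δ B₁) (hB₂ : IsMinimalSubaut δ B₂) (hne : B₁ ≠ B₂)
    (h₁ : B₁ ⊆ Rset δ a₁) (h₂ : B₂ ⊆ Rset δ a₂) :
    Rset δ a₁ ∩ Rset δ a₂ = ∅ :=
  stmt_5_general δ h a₁ a₂ B₁ B₂ hB₁ hB₂ hne h₁ h₂
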